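/- arXiv:2408.11580 — 4 statements merged into one kernel-verified Lean document; each statement's English description precedes it below -/
import Mathlib

section
/- Let T > 0 and let Φ be a real constant. Suppose y : [0,T] → ℝ is differentiable with y'(σ) = Φ + v(σ) for all σ ∈ [0,T], where v : [0,T] → ℝ is continuous. Then Φ = -(6/T³) ∫₀ᵀ ((T - 2σ)·y(σ) + σ(T - σ)·v(σ)) dσ. -/
/-!
The weight `w σ = σ (T - σ)` vanishes at both ends of `[0, T]` and has `w' σ = T - 2σ`.
Integrating `(w y)' = w' y + w (Φ + v)` over `[0, T]` therefore gives
`∫ (w' y + w v) = -Φ ∫ w = -Φ T³ / 6`, in which `y(0)` no longer appears.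
-/

open MeasureTheory intervalIntegral

theorem hasDerivAt_mul_sub_self (T x : ℝ) :
    HasDerivAt (fun σ => σ * (T - σ)) (T - 2 * x) x :=
  ((hasDerivAt_id' x).fun_mul ((hasDerivAt_id' x).const_sub T)).congr_deriv (by ring)

theorem integral_mul_sub_self (T : ℝ) : ∫ σ in (0:ℝ)..T, σ * (T - σ) = T ^ 3 / 6 := by
  have hpoly : (fun σ : ℝ => σ * (T - σ)) = fun σ => T * σ - σ ^ 2 := by
    ext σ; ring
  rw [hpoly, intervalIntegral.integral_sub (Continuous.intervalIntegrable (by fun_prop) 0 T)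
    (Continuous.intervalIntegrable (by fun_prop) 0 T), intervalIntegral.integral_const_mul,
    integral_id, integral_pow]
  ring

theorem integral_by_parts_mul_sub_self
    {T Φ : ℝ} (hT : 0 ≤ T) {y v : ℝ → ℝ} (hv : IntervalIntegrable v volume 0 T)
    (hy : ∀ σ ∈ Set.Icc 0 T, HasDerivAt y (Φ + v σ) σ) :
    ∫ σ in (0:ℝ)..T, ((T - 2 * σ) * y σ + σ * (T - σ) * v σ) = -(Φ * T ^ 3 / 6) := by
  rw [← Set.uIcc_of_le hT] at hy
  have hparts := integral_deriv_mul_eq_sub (fun σ _ => hasDerivAt_mul_sub_self T σ) hy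
    (Continuous.intervalIntegrable (by fun_prop) 0 T)
    (intervalIntegrable_const.add hv)
  simp only [sub_self, mul_zero, zero_mul, sub_zero] at hparts
  have hy_cont : ContinuousOn y (Set.uIcc 0 T) := fun σ hσ =>
    (hy σ hσ).continuousAt.continuousWithinAt
  have hsplit : ∀ σ : ℝ, (T - 2 * σ) * y σ + σ * (T - σ) * (Φ + v σ)
      = ((T - 2 * σ) * y σ + σ * (T - σ) * v σ) + Φ * (σ * (T - σ)) := fun σ => by ring
  simp only [hsplit] at hparts
  rw [intervalIntegral.integral_add, intervalIntegral.integral_const_mul,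
    integral_mul_sub_self] at hparts
  · linarith
  · exact (ContinuousOn.mul (by fun_prop) hy_cont).intervalIntegrable.add
      (hv.continuousOn_mul (by fun_prop))
  · exact Continuous.intervalIntegrable (by fun_prop) 0 T

theorem firstOrder_estimator_correct (T Φ : ℝ) (hT : 0 < T) (y v : ℝ → ℝ)
    (hv : ContinuousOn v (Set.Icc 0 T))
    (hy : ∀ σ ∈ Set.Icc (0:ℝ) T, HasDerivAt y (Φ + v σ) σ) :
    Φ = -(6 / T ^ 3) *
      ∫ σ in (0:ℝ)..T, ((T - 2 * σ) * y σ + σ * (T - σ) * v σ) := by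
  have hv_int : IntervalIntegrable v volume 0 T :=
    (hv.mono (Set.uIcc_of_le hT.le).subset).intervalIntegrable
  rw [integral_by_parts_mul_sub_self hT.le hv_int hy]
  field_simp
end

section
/- Let T > 0 and let Φ be a real constant. Suppose y : [0,T] → ℝ is twice differentiable with y''(σ) = Φ + v(σ) for all σ ∈ [0,T], where v : [0,T] → ℝ is continuous. Then Φ = (60/T⁵)·( ∫₀ᵀ ((T-σ)² - 4(T-σ)σ + σ²)·y(σ) dσ − (1/2) ∫₀ᵀ (T-σ)²σ²·v(σ) dσ ). -/
open MeasureTheory intervalIntegral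

theorem secondOrder_estimator_correct (T Φ : ℝ) (hT : 0 < T) (y y' v : ℝ → ℝ)
    (hv : ContinuousOn v (Set.Icc 0 T))
    (hy : ∀ σ ∈ Set.Icc (0:ℝ) T, HasDerivAt y (y' σ) σ)
    (hy' : ∀ σ ∈ Set.Icc (0:ℝ) T, HasDerivAt y' (Φ + v σ) σ) :
    Φ = 60 / T ^ 5 *
      ((∫ σ in (0:ℝ)..T, ((T - σ) ^ 2 - 4 * (T - σ) * σ + σ ^ 2) * y σ) -
        (1 / 2) * ∫ σ in (0:ℝ)..T, (T - σ) ^ 2 * σ ^ 2 * v σ) := by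
  have hIcc : Set.uIcc (0:ℝ) T = Set.Icc 0 T := Set.uIcc_of_le hT.le
  have hyc : ContinuousOn y (Set.Icc 0 T) := fun x hx => (hy x hx).continuousAt.continuousWithinAt
  have hy'c : ContinuousOn y' (Set.Icc 0 T) :=
    fun x hx => (hy' x hx).continuousAt.continuousWithinAt
  set p : ℝ → ℝ := fun σ => T^2*σ - 3*T*σ^2 + 2*σ^3 with hp
  set q : ℝ → ℝ := fun σ => -(T^2*σ^2/2 - T*σ^3 + σ^4/2) with hq
  have hpd : ∀ σ : ℝ, HasDerivAt p ((T - σ)^2 - 4*(T-σ)*σ + σ^2) σ := by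
    intro σ
    have h : HasDerivAt p (T^2*1 - 3*T*(2*σ^1) + 2*(3*σ^2)) σ := by
      exact (((hasDerivAt_id σ).const_mul (T^2)).sub
        ((hasDerivAt_pow 2 σ).const_mul (3*T))).add ((hasDerivAt_pow 3 σ).const_mul 2)
    convert h using 1; ring
  have hqd : ∀ σ : ℝ, HasDerivAt q (-(p σ)) σ := by
    intro σ
    have h : HasDerivAt q (-(T^2*(2*σ^1)/2 - T*(3*σ^2) + (4*σ^3)/2)) σ := by
      exact ((((hasDerivAt_pow 2 σ).const_mul (T^2)).div_const 2 |>.sub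
        ((hasDerivAt_pow 3 σ).const_mul T)).add ((hasDerivAt_pow 4 σ).div_const 2)).neg
    convert h using 1; simp [hp]; ring
  have hpc : Continuous p := by fun_prop
  have hqc : Continuous q := by fun_prop
  -- first integration by parts
  have ibp1 : (∫ σ in (0:ℝ)..T, y σ * ((T - σ)^2 - 4*(T-σ)*σ + σ^2)) =
      y T * p T - y 0 * p 0 - ∫ σ in (0:ℝ)..T, y' σ * p σ := by
    apply intervalIntegral.integral_mul_deriv_eq_deriv_mul
    · intro x hx; exact hy x (hIcc ▸ hx)
    · intro x hx; exact hpd x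
    · exact (hy'c.mono (by rw [hIcc])).intervalIntegrable
    · exact (show Continuous fun σ : ℝ => (T - σ)^2 - 4*(T-σ)*σ + σ^2 by fun_prop).intervalIntegrable 0 T
  have ibp2 : (∫ σ in (0:ℝ)..T, y' σ * (-(p σ))) =
      y' T * q T - y' 0 * q 0 - ∫ σ in (0:ℝ)..T, (Φ + v σ) * q σ := by
    apply intervalIntegral.integral_mul_deriv_eq_deriv_mul
    · intro x hx; exact hy' x (hIcc ▸ hx)
    · intro x hx; exact hqd x
    · exact ((continuousOn_const.add hv).mono (by rw [hIcc])).intervalIntegrable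
    · exact hpc.neg.intervalIntegrable 0 T
  have hpT : p T = 0 := by simp [hp]; ring
  have hp0 : p 0 = 0 := by simp [hp]
  have hqT : q T = 0 := by simp [hq]; ring
  have hq0 : q 0 = 0 := by simp [hq]
  have hivp : IntervalIntegrable (fun σ => v σ * q σ) volume 0 T :=
    ((hv.mono (by rw [hIcc])).mul hqc.continuousOn).intervalIntegrable
  have hiq : IntervalIntegrable q volume 0 T := hqc.intervalIntegrable 0 T
  -- value of ∫ q
  have hqint : (∫ σ in (0:ℝ)..T, q σ) = -(T^5/60) := by
    have h : ∀ σ ∈ Set.uIcc (0:ℝ) T,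
        HasDerivAt (fun σ => -(T^2*σ^3/6 - T*σ^4/4 + σ^5/10)) (q σ) σ := by
      intro σ _
      have h : HasDerivAt (fun σ => -(T^2*σ^3/6 - T*σ^4/4 + σ^5/10))
          (-(T^2*(3*σ^2)/6 - T*(4*σ^3)/4 + (5*σ^4)/10)) σ := by
        exact ((((hasDerivAt_pow 3 σ).const_mul (T^2)).div_const 6 |>.sub
          (((hasDerivAt_pow 4 σ).const_mul T).div_const 4)).add
          ((hasDerivAt_pow 5 σ).div_const 10)).neg
      convert h using 1; simp [hq]; ring
    rw [integral_eq_sub_of_hasDerivAt h hiq]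
    ring
  -- combine
  have key : (∫ σ in (0:ℝ)..T, ((T - σ)^2 - 4*(T-σ)*σ + σ^2) * y σ) =
      Φ * (T^5/60) + (1/2) * ∫ σ in (0:ℝ)..T, (T - σ)^2 * σ^2 * v σ := by
    have e1 : (∫ σ in (0:ℝ)..T, ((T - σ)^2 - 4*(T-σ)*σ + σ^2) * y σ) =
        ∫ σ in (0:ℝ)..T, y σ * ((T - σ)^2 - 4*(T-σ)*σ + σ^2) := by
      congr 1; ext σ; ring
    have e2 : (∫ σ in (0:ℝ)..T, (Φ + v σ) * q σ) =
        Φ * (∫ σ in (0:ℝ)..T, q σ) + ∫ σ in (0:ℝ)..T, v σ * q σ := by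
      rw [← intervalIntegral.integral_const_mul, ← intervalIntegral.integral_add
        (hiq.const_mul Φ) hivp]
      congr 1; ext σ; ring
    have e3 : (∫ σ in (0:ℝ)..T, v σ * q σ) =
        -((1/2) * ∫ σ in (0:ℝ)..T, (T - σ)^2 * σ^2 * v σ) := by
      rw [← intervalIntegral.integral_const_mul, ← intervalIntegral.integral_neg]
      congr 1; ext σ; simp [hq]; ring
    rw [e1, ibp1, hpT, hp0]
    have e4 : (∫ σ in (0:ℝ)..T, y' σ * p σ) = -∫ σ in (0:ℝ)..T, y' σ * (-(p σ)) := by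
      rw [← intervalIntegral.integral_neg]; congr 1; ext σ; ring
    rw [e4, ibp2, hqT, hq0, e2, e3, hqint]
    ring
  rw [key]
  field_simp
  ring
end

section
/- Let F : ℝ → ℝ be continuous and suppose y satisfies y'(σ) = F(σ) + v(σ) with v continuous. Fix a time t. Then the sliding-window estimate F_est(T) := -(6/T³) ∫₀ᵀ ((T - 2σ)·y(t - T + σ) + σ(T - σ)·v(t - T + σ)) dσ converges to F(t) as T → 0⁺. -/
/-!
The weight `σ * (T - σ)` vanishes at both ends of `[0, T]` and has derivative `T - 2σ`, so
integrating by parts against `y' = F + v` cancels the `y` and `v` terms: the estimate is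
`(6 / T ^ 3) ∫₀ᵀ σ (T - σ) F (t - T + σ) dσ`, an average of `F` over `[t - T, t]` against a
kernel of total mass one. Rescaling `σ = T u` turns it into `6 ∫₀¹ u (1 - u) F (t - T + T u) du`,
which is continuous in `T` and equals `F t` at `T = 0`.
-/

open MeasureTheory intervalIntegral Filter Topology

theorem integral_window_by_parts_eq_zero {y y' : ℝ → ℝ} (hy : ∀ s, HasDerivAt y (y' s) s)
    (hy' : Continuous y') (T t : ℝ) :
    ∫ σ in (0:ℝ)..T, ((T - 2 * σ) * y (t - T + σ) + σ * (T - σ) * y' (t - T + σ)) = 0 := by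
  have hw (σ : ℝ) : HasDerivAt (fun s : ℝ => s * (T - s)) (T - 2 * σ) σ :=
    ((hasDerivAt_id' σ).mul ((hasDerivAt_id' σ).const_sub T)).congr_deriv (by ring)
  have hshift (σ : ℝ) : HasDerivAt (fun s => y (t - T + s)) (y' (t - T + σ)) σ :=
    (hy _).comp_const_add (t - T) σ
  rw [integral_deriv_mul_eq_sub (fun σ _ => hw σ) (fun σ _ => hshift σ)
    (Continuous.intervalIntegrable (by fun_prop) _ _)
    (Continuous.intervalIntegrable (by fun_prop) _ _)]
  ring

theorem integral_window_weight_mul_comp_rescale (g : ℝ → ℝ) (T t : ℝ) :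
    ∫ σ in (0:ℝ)..T, σ * (T - σ) * g (t - T + σ) =
      T ^ 3 * ∫ u in (0:ℝ)..1, u * (1 - u) * g (t - T + T * u) := by
  have h := smul_integral_comp_mul_left (fun σ => σ * (T - σ) * g (t - T + σ)) T (a := 0) (b := 1)
  simp only [mul_zero, mul_one, smul_eq_mul] at h
  rw [← h, ← intervalIntegral.integral_const_mul, ← intervalIntegral.integral_const_mul]
  congr 1 with u
  ring

theorem integral_unit_window_weight : ∫ u in (0:ℝ)..1, u * (1 - u) = 1 / 6 := by
  simp only [mul_sub, mul_one, ← pow_two]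
  rw [integral_sub intervalIntegrable_id (intervalIntegrable_pow 2), integral_id, integral_pow]
  norm_num

theorem tendsto_window_average {g : ℝ → ℝ} (hg : Continuous g) (t : ℝ) :
    Tendsto (fun T : ℝ => 6 / T ^ 3 * ∫ σ in (0:ℝ)..T, σ * (T - σ) * g (t - T + σ))
      (𝓝[≠] 0) (𝓝 (g t)) := by
  have hcont : Continuous fun T : ℝ => 6 * ∫ u in (0:ℝ)..1, u * (1 - u) * g (t - T + T * u) := by
    fun_prop
  have hlim := hcont.tendsto 0
  simp only [zero_mul, sub_zero, add_zero, intervalIntegral.integral_mul_const,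
    integral_unit_window_weight] at hlim
  rw [show 6 * (1 / 6 * g t) = g t by ring] at hlim
  refine (tendsto_nhdsWithin_of_tendsto_nhds hlim).congr' ?_
  filter_upwards [self_mem_nhdsWithin] with T hT
  rw [integral_window_weight_mul_comp_rescale, ← mul_assoc, div_mul_cancel₀ 6 (pow_ne_zero 3 hT)]

theorem sliding_window_estimator_tendsto (F v y : ℝ → ℝ) (hF : Continuous F)
    (hv : Continuous v) (hy : ∀ σ, HasDerivAt y (F σ + v σ) σ) (t : ℝ) :
    Tendsto
      (fun T : ℝ => -(6 / T ^ 3) *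
        ∫ σ in (0:ℝ)..T,
          ((T - 2 * σ) * y (t - T + σ) + σ * (T - σ) * v (t - T + σ)))
      (nhdsWithin 0 (Set.Ioi 0)) (nhds (F t)) := by
  have hy_cont : Continuous y := continuous_iff_continuousAt.2 fun s => (hy s).continuousAt
  have h_ibp (T : ℝ) :
      ∫ σ in (0:ℝ)..T, ((T - 2 * σ) * y (t - T + σ) + σ * (T - σ) * v (t - T + σ)) =
        -∫ σ in (0:ℝ)..T, σ * (T - σ) * F (t - T + σ) := by
    rw [eq_neg_iff_add_eq_zero, ← integral_add (Continuous.intervalIntegrable (by fun_prop) _ _)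
      (Continuous.intervalIntegrable (by fun_prop) _ _)]
    refine Eq.trans ?_ (integral_window_by_parts_eq_zero hy (hF.add hv) T t)
    congr 1 with σ
    ring
  simp only [h_ibp, neg_mul_neg]
  exact (tendsto_window_average hF t).mono_left (nhdsWithin_mono _ fun T hT => ne_of_gt hT)
end

section
/- Let E : ℝ^{n+2} → ℝ be C¹ and let y, u : ℝ × (−ε₀, ε₀) → ℝ be smooth families satisfying E(y, y', …, y^{(n)}, u)(t, ε) = 0 identically (derivatives in t). Let δy^{(ι)}(t) = ∂/∂ε|_{ε=0} of ∂^ι y/∂t^ι and δu(t) = ∂u/∂ε(t, 0). Suppose at ε = 0 the index ν ∈ {1,…,n} is minimal with ∂E/∂y^{(ν)} ≠ 0 along the trajectory. Then d^ν/dt^ν (δy) = 𝔉 + 𝔞·δu, where 𝔉 = −Σ_{ι ≠ ν} (∂E/∂y^{(ι)} / ∂E/∂y^{(ν)})·δy^{(ι)} and 𝔞 = −(∂E/∂u)/(∂E/∂y^{(ν)}), all partial derivatives evaluated along the reference trajectory. -/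
/-!
Differentiating the identity `E(y, ẏ, …, y⁽ⁿ⁾, u) = 0` in `ε` at `ε = 0` gives, by the chain
rule, the linear relation `∑ ι, ∂E/∂y⁽ᶥ⁾ · δy⁽ᶥ⁾ + ∂E/∂u · δu = 0`. Since `∂/∂t` and `∂/∂ε`
commute, `δy⁽ᶥ⁾` is the `ι`-th time derivative of `δy`, so solving the relation for `δy⁽ᵛ⁾`,
whose coefficient `∂E/∂y⁽ᵛ⁾` is nonzero, gives the tangent linear system.
-/

open Finset

theorem iteratedDeriv_eq_of_hasDerivAt_succ {𝕜 F : Type*} [NontriviallyNormedField 𝕜]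
    [NormedAddCommGroup F] [NormedSpace 𝕜 F] {n : ℕ} {f : ℕ → 𝕜 → F}
    (hf : ∀ i < n, ∀ t, HasDerivAt (f i) (f (i + 1) t) t) :
    ∀ k ≤ n, iteratedDeriv k (f 0) = f k
  | 0, _ => iteratedDeriv_zero
  | k + 1, hk => by
    rw [iteratedDeriv_succ, iteratedDeriv_eq_of_hasDerivAt_succ hf k (by omega)]
    exact funext fun t => (hf k (by omega) t).deriv

theorem HasFDerivAt.apply_eq_zero_of_comp_eq_const {𝕜 E F : Type*} [NontriviallyNormedField 𝕜]
    [NormedAddCommGroup E] [NormedSpace 𝕜 E] [NormedAddCommGroup F] [NormedSpace 𝕜 F]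
    {Φ : E → F} {Φ' : E →L[𝕜] F} {g : 𝕜 → E} {g' : E} {x : 𝕜} {c : F}
    (hΦ : HasFDerivAt Φ Φ' (g x)) (hg : HasDerivAt g g' x) (hc : ∀ s, Φ (g s) = c) :
    Φ' g' = 0 :=
  have hconst : HasDerivAt (Φ ∘ g) 0 x := by
    simpa only [Function.comp_def, hc] using hasDerivAt_const x c
  (hΦ.comp_hasDerivAt x hg).unique hconst

theorem ContinuousLinearMap.apply_prod_pi_eq_sum {R M : Type*} [CommSemiring R]
    [TopologicalSpace R] [AddCommMonoid M] [Module R M] [TopologicalSpace M]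
    {ι : Type*} [Fintype ι] [DecidableEq ι] (L : (ι → R) × R →L[R] M) (v : ι → R) (w : R) :
    L (v, w) = ∑ i, v i • L (Pi.single i 1, 0) + w • L (0, 1) := by
  have hv : ((v, w) : (ι → R) × R) = (∑ i, v i • (Pi.single i 1, 0)) + w • (0, 1) := by
    ext <;> simp [Prod.fst_sum, Prod.snd_sum, Finset.sum_apply, Pi.single_apply]
  rw [hv, map_add, map_sum]
  simp only [map_smul]

theorem eq_neg_sum_erase_div_add_of_sum_mul_add_mul_eq_zero {K ι : Type*} [Field K] [Fintype ι]
    [DecidableEq ι] {c x : ι → K} {q w : K} {j : ι} (hj : c j ≠ 0)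
    (h : ∑ i, x i * c i + w * q = 0) :
    x j = -∑ i ∈ univ.erase j, c i / c j * x i + -(q / c j) * w := by
  rw [← add_sum_erase _ _ (mem_univ j)] at h
  simp only [div_mul_eq_mul_div, ← sum_div, mul_comm (c _)]
  field_simp
  linear_combination h

/-- Derivation of the monovariable homeostat: differentiating the implicit
input–output relation `E(y, ẏ, …, y⁽ⁿ⁾, u) = 0` along a one-parameter family of
trajectories at `ε = 0`. `Y i t ε` is the `i`-th time derivative `y⁽ⁱ⁾(t, ε)`,
`P ι` is `∂E/∂y⁽ᶥ⁾` and `Q` is `∂E/∂u`, evaluated along the reference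
trajectory `ε = 0`. -/
theorem homeostat_derivation (n ν : ℕ) (hνn : ν ≤ n)
    (E : ((Fin (n + 1) → ℝ) × ℝ) → ℝ) (hE : ContDiff ℝ 1 E)
    (Y : ℕ → ℝ → ℝ → ℝ) (u : ℝ → ℝ → ℝ)
    -- the family satisfies the implicit relation identically:
    (htraj : ∀ t ε, E (fun i : Fin (n + 1) => Y (i : ℕ) t ε, u t ε) = 0)
    -- smoothness of the family in the parameter `ε`:
    (hYε : ∀ i ≤ n, ∀ t, DifferentiableAt ℝ (fun ε => Y i t ε) 0)
    (huε : ∀ t, DifferentiableAt ℝ (fun ε => u t ε) 0)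
    -- partial derivatives w.r.t. `t` and `ε` commute (smoothness):
    (hcomm : ∀ i < n, ∀ t, HasDerivAt (fun t' => deriv (fun ε => Y i t' ε) 0)
      (deriv (fun ε => Y (i + 1) t ε) 0) t)
    (P : Fin (n + 1) → ℝ → ℝ) (Q : ℝ → ℝ)
    (hP : ∀ ι t, P ι t =
      fderiv ℝ E (fun i : Fin (n + 1) => Y (i : ℕ) t 0, u t 0) (Pi.single ι 1, 0))
    (hQ : ∀ t, Q t =
      fderiv ℝ E (fun i : Fin (n + 1) => Y (i : ℕ) t 0, u t 0) (0, 1))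
    (hPν : ∀ t, P (⟨ν, by omega⟩ : Fin (n + 1)) t ≠ 0) :
    ∀ t, iteratedDeriv ν (fun t' => deriv (fun ε => Y 0 t' ε) 0) t =
      (-∑ ι ∈ Finset.univ.erase (⟨ν, by omega⟩ : Fin (n + 1)),
          (P ι t / P (⟨ν, by omega⟩ : Fin (n + 1)) t) *
            deriv (fun ε => Y (ι : ℕ) t ε) 0) +
        (-(Q t / P (⟨ν, by omega⟩ : Fin (n + 1)) t)) * deriv (fun ε => u t ε) 0 := by
  intro t
  have hvariation : HasDerivAt (fun ε => (fun i : Fin (n + 1) => Y i t ε, u t ε))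
      (fun i : Fin (n + 1) => deriv (fun ε => Y i t ε) 0, deriv (fun ε => u t ε) 0) 0 :=
    (hasDerivAt_pi.2 fun i : Fin (n + 1) => (hYε i i.is_le t).hasDerivAt).prodMk
      (huε t).hasDerivAt
  have hlinear := ((hE.differentiable one_ne_zero _).hasFDerivAt).apply_eq_zero_of_comp_eq_const
    hvariation (htraj t)
  rw [ContinuousLinearMap.apply_prod_pi_eq_sum] at hlinear
  simp only [smul_eq_mul, ← hP, ← hQ] at hlinear
  rw [iteratedDeriv_eq_of_hasDerivAt_succ hcomm ν hνn]
  exact eq_neg_sum_erase_div_add_of_sum_mul_add_mul_eq_zero (c := (P · t)) (hPν t) hlinear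
end
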